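/- Let S be a topological space, H a Stonean vector sublattice of continuous functions on S, X' : Ω' → S with closed range, and μ a nonnegative finitely additive measure structure on Ω' such that X' is μ-tight. If (h_n) is a sequence in H decreasing pointwise to 0 on X'[Ω'], then lim_n ∫ h_n(X') dμ = 0. -/

import Mathlib

/-!
Approximate `h₀ ∘ X'` in `L¹(μ)` by a simple function `φ ≤ M · 𝟙[A]` with `A ∈ 𝒜`. Tightness
gives `B ∈ 𝒜` of small measure off which `X'` lands in a compact `K`; since the range of `X'` is
closed, `K ∩ range X'` is compact and Dini's theorem makes `hₙ → 0` uniformly there. Hence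
eventually `hₙ ∘ X' ≤ |h₀ ∘ X' - φ| + δ · 𝟙[A] + M · 𝟙[B]`, whose integral is small.

The integral enters only through its monotonicity, i.e. positivity: for `f ≥ 0` the negative parts
of the simple approximants of `f` tend to `0` in measure and in `L¹`, so their elementary
integrals tend to `0`. Elementary integrals of nonnegative simple functions are nonnegative, as
one sees on the atoms of the finite family of sets representing the function.
-/

open scoped ENNReal
open MeasureTheory Filter

namespace FA

variable {Ω : Type*}

/-- Outer measure induced by a finitely additive set function on a ring. -/
noncomputable def outer (𝒜 : Set (Set Ω)) (l : Set Ω → ℝ) (E : Set Ω) : ℝ≥0∞ :=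
  ⨅ (A : Set Ω) (_ : A ∈ 𝒜) (_ : E ⊆ A), ENNReal.ofReal (l A)

/-- Inner measure induced by a finitely additive set function on a ring. -/
noncomputable def inner (𝒜 : Set (Set Ω)) (l : Set Ω → ℝ) (E : Set Ω) : ℝ≥0∞ :=
  ⨆ (B : Set Ω) (_ : B ∈ 𝒜) (_ : B ⊆ E), ENNReal.ofReal (l B)

/-- `f` is an `𝒜`-simple function. -/
def IsSimple (𝒜 : Set (Set Ω)) (f : Ω → ℝ) : Prop :=
  ∃ (s : Finset (Set Ω)) (c : Set Ω → ℝ), (∀ A ∈ s, A ∈ 𝒜) ∧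
    ∀ ω, f ω = ∑ A ∈ s, c A * (A.indicator (fun _ => (1 : ℝ)) ω)

/-- `I` is the elementary integral of the `𝒜`-simple function `f` with respect to `l`. -/
def SimpleIntegralEq (𝒜 : Set (Set Ω)) (l : Set Ω → ℝ) (f : Ω → ℝ) (I : ℝ) : Prop :=
  ∃ (s : Finset (Set Ω)) (c : Set Ω → ℝ), (∀ A ∈ s, A ∈ 𝒜) ∧
    (∀ ω, f ω = ∑ A ∈ s, c A * (A.indicator (fun _ => (1 : ℝ)) ω)) ∧
    I = ∑ A ∈ s, c A * l A

/-- `f n` converges to `g` in `l`-measure. -/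
def ConvInMeasure (𝒜 : Set (Set Ω)) (l : Set Ω → ℝ) (f : ℕ → Ω → ℝ) (g : Ω → ℝ) : Prop :=
  ∀ c : ℝ, 0 < c →
    Tendsto (fun n => outer 𝒜 l {ω | c < |f n ω - g ω|}) atTop (nhds 0)

/-- The sequence `f` is Cauchy in the `L¹(l)` seminorm. -/
def CauchyL1 (𝒜 : Set (Set Ω)) (l : Set Ω → ℝ) (f : ℕ → Ω → ℝ) : Prop :=
  ∀ ε : ℝ, 0 < ε → ∃ N : ℕ, ∀ m ≥ N, ∀ n ≥ N,
    ∃ I : ℝ, SimpleIntegralEq 𝒜 l (fun ω => |f m ω - f n ω|) I ∧ I < ε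

/-- `f` is integrable in the finitely additive (Dunford–Schwartz) sense with integral `I`. -/
def HasIntegral (𝒜 : Set (Set Ω)) (l : Set Ω → ℝ) (f : Ω → ℝ) (I : ℝ) : Prop :=
  ∃ (g : ℕ → Ω → ℝ) (J : ℕ → ℝ), (∀ n, IsSimple 𝒜 (g n)) ∧
    ConvInMeasure 𝒜 l g f ∧ CauchyL1 𝒜 l g ∧
    (∀ n, SimpleIntegralEq 𝒜 l (g n) (J n)) ∧ Tendsto J atTop (nhds I)

/-- `f ∈ L¹(l)`. -/
def MemL1 (𝒜 : Set (Set Ω)) (l : Set Ω → ℝ) (f : Ω → ℝ) : Prop :=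
  ∃ I : ℝ, HasIntegral 𝒜 l f I

/-- `f` is `l`-measurable: an `l`-limit in measure of `𝒜`-simple functions. -/
def FAMeasurable (𝒜 : Set (Set Ω)) (l : Set Ω → ℝ) (f : Ω → ℝ) : Prop :=
  ∃ g : ℕ → Ω → ℝ, (∀ n, IsSimple 𝒜 (g n)) ∧ ConvInMeasure 𝒜 l g f

/-- `(𝒜, l)` is a finitely additive measure structure on `Ω`. -/
def FAMeasure (𝒜 : Set (Set Ω)) (l : Set Ω → ℝ) : Prop :=
  MeasureTheory.IsSetRing 𝒜 ∧ (∀ A ∈ 𝒜, 0 ≤ l A) ∧ l ∅ = 0 ∧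
    ∀ A ∈ 𝒜, ∀ B ∈ 𝒜, Disjoint A B → l (A ∪ B) = l A + l B

/-- The ring `𝒜(l)` of sets whose inner and outer measures agree and are finite. -/
def AgreeRing (𝒜 : Set (Set Ω)) (l : Set Ω → ℝ) : Set (Set Ω) :=
  {E : Set Ω | outer 𝒜 l E = inner 𝒜 l E ∧ outer 𝒜 l E < ⊤}

end FA

open FA MeasureTheory Filter

open scoped Topology
open Set

namespace FA

variable {Ω : Type*} {𝒜 : Set (Set Ω)} {μ : Set Ω → ℝ}

local notation "𝟙[" A "]" => Set.indicator A (fun _ => (1 : ℝ))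

lemma FAMeasure.measure_biUnion_finset (hμ : FAMeasure 𝒜 μ) {ι : Type*} (t : Finset ι)
    {f : ι → Set Ω} (hf : ∀ i ∈ t, f i ∈ 𝒜) (hdisj : (t : Set ι).PairwiseDisjoint f) :
    μ (⋃ i ∈ t, f i) = ∑ i ∈ t, μ (f i) := by
  classical
  induction t using Finset.induction with
  | empty => simpa using hμ.2.2.1
  | insert i t hit ih =>
    rw [Finset.coe_insert, pairwiseDisjoint_insert] at hdisj
    have hft : ∀ j ∈ t, f j ∈ 𝒜 := fun j hj => hf j (Finset.mem_insert_of_mem hj)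
    have hi : Disjoint (f i) (⋃ j ∈ t, f j) :=
      disjoint_iUnion₂_right.2 fun j hj => hdisj.2 j hj fun h => hit (h ▸ hj)
    rw [Finset.sum_insert hit, Finset.set_biUnion_insert,
      hμ.2.2.2 _ (hf i (Finset.mem_insert_self i t)) _ (hμ.1.biUnion_mem t hft) hi,
      ih hft hdisj.1]

lemma FAMeasure.mono (hμ : FAMeasure 𝒜 μ) {A B : Set Ω} (hA : A ∈ 𝒜) (hB : B ∈ 𝒜)
    (hAB : A ⊆ B) : μ A ≤ μ B := by
  have h := hμ.2.2.2 A hA (B \ A) (hμ.1.sdiff_mem hB hA) disjoint_sdiff_right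
  rw [union_sdiff_cancel hAB] at h
  linarith [hμ.2.1 _ (hμ.1.sdiff_mem hB hA)]

lemma FAMeasure.union_le (hμ : FAMeasure 𝒜 μ) {A B : Set Ω} (hA : A ∈ 𝒜) (hB : B ∈ 𝒜) :
    μ (A ∪ B) ≤ μ A + μ B := by
  have h := hμ.2.2.2 A hA (B \ A) (hμ.1.sdiff_mem hB hA) disjoint_sdiff_right
  rw [union_sdiff_self] at h
  linarith [hμ.mono (hμ.1.sdiff_mem hB hA) hB sdiff_subset]

section Atoms

def atomOf (s T : Finset (Set Ω)) : Set Ω := {ω | ∀ A ∈ s, ω ∈ A ↔ A ∈ T}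

open Classical in
lemma mem_atomOf_filter (s : Finset (Set Ω)) (ω : Ω) : ω ∈ atomOf s {A ∈ s | ω ∈ A} :=
  fun A hA => by simp [hA]

lemma eq_of_mem_atomOf {s T T' : Finset (Set Ω)} (hT : T ⊆ s) (hT' : T' ⊆ s) {ω : Ω}
    (h : ω ∈ atomOf s T) (h' : ω ∈ atomOf s T') : T = T' := by
  ext A
  exact ⟨fun hA => (h' A (hT hA)).1 ((h A (hT hA)).2 hA),
    fun hA => (h A (hT' hA)).1 ((h' A (hT' hA)).2 hA)⟩

lemma atomOf_mem (hr : IsSetRing 𝒜) {s T : Finset (Set Ω)} (hs : ∀ A ∈ s, A ∈ 𝒜)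
    (hT : T ⊆ s) (hT₀ : T.Nonempty) : atomOf s T ∈ 𝒜 := by
  classical
  have heq : atomOf s T = (⋂ A ∈ T, A) \ ⋃ A ∈ s \ T, A := by
    ext ω
    simp only [atomOf, mem_ofPred_eq, Set.mem_sdiff, mem_iInter, mem_iUnion, Finset.mem_sdiff,
      not_exists]
    exact ⟨fun h => ⟨fun A hA => (h A (hT hA)).2 hA, fun A hA hωA => hA.2 ((h A hA.1).1 hωA)⟩,
      fun h A hA => ⟨fun hωA => by_contra fun hAT => h.2 A ⟨hA, hAT⟩ hωA, fun hAT => h.1 A hAT⟩⟩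
  rw [heq]
  exact hr.sdiff_mem (hr.biInter_mem T hT₀ fun A hA => hs A (hT hA))
    (hr.biUnion_mem _ fun A hA => hs A (Finset.mem_sdiff.1 hA).1)

lemma sum_mul_indicator_eq_of_mem_atomOf (s : Finset (Set Ω)) (c : Set Ω → ℝ)
    {T : Finset (Set Ω)} (hT : T ⊆ s) {ω : Ω} (hω : ω ∈ atomOf s T) :
    ∑ A ∈ s, c A * 𝟙[A] ω = ∑ A ∈ T, c A := by
  classical
  rw [← Finset.sum_subset hT fun A hA hAT => by
    rw [indicator_of_notMem fun h => hAT ((hω A hA).1 h), mul_zero]]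
  exact Finset.sum_congr rfl fun A hA => by
    rw [indicator_of_mem ((hω A (hT hA)).2 hA), mul_one]

open Classical in
lemma FAMeasure.measure_eq_sum_atomOf (hμ : FAMeasure 𝒜 μ) {s : Finset (Set Ω)}
    (hs : ∀ A ∈ s, A ∈ 𝒜) {A : Set Ω} (hA : A ∈ s) :
    μ A = ∑ T ∈ s.powerset with A ∈ T, μ (atomOf s T) := by
  have hA_eq : A = ⋃ T ∈ {T ∈ s.powerset | A ∈ T}, atomOf s T := by
    ext ω
    simp only [mem_iUnion, Finset.mem_filter, Finset.mem_powerset, exists_prop]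
    exact ⟨fun hω => ⟨_, ⟨Finset.filter_subset _ _, Finset.mem_filter.2 ⟨hA, hω⟩⟩,
      mem_atomOf_filter s ω⟩, fun ⟨T, ⟨hTs, hAT⟩, hω⟩ => (hω A (hTs hAT)).2 hAT⟩
  conv_lhs => rw [hA_eq]
  refine hμ.measure_biUnion_finset _ (fun T hT => ?_) fun T hT T' hT' hne => ?_
  · simp only [Finset.mem_filter, Finset.mem_powerset] at hT
    exact atomOf_mem hμ.1 hs hT.1 ⟨A, hT.2⟩
  · simp only [Finset.coe_filter, Finset.mem_powerset, mem_ofPred_eq] at hT hT'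
    exact disjoint_left.2 fun ω h h' => hne (eq_of_mem_atomOf hT.1 hT'.1 h h')

open Classical in
lemma FAMeasure.sum_mul_measure_eq_sum_atomOf (hμ : FAMeasure 𝒜 μ) {s : Finset (Set Ω)}
    (c : Set Ω → ℝ) (hs : ∀ A ∈ s, A ∈ 𝒜) :
    ∑ A ∈ s, c A * μ A = ∑ T ∈ s.powerset, (∑ A ∈ T, c A) * μ (atomOf s T) := by
  calc ∑ A ∈ s, c A * μ A
      = ∑ A ∈ s, ∑ T ∈ s.powerset, if A ∈ T then c A * μ (atomOf s T) else 0 := by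
        refine Finset.sum_congr rfl fun A hA => ?_
        rw [hμ.measure_eq_sum_atomOf hs hA, Finset.mul_sum, Finset.sum_filter]
    _ = ∑ T ∈ s.powerset, (∑ A ∈ T, c A) * μ (atomOf s T) := by
        rw [Finset.sum_comm]
        refine Finset.sum_congr rfl fun T hT => ?_
        rw [Finset.sum_ite_mem, Finset.inter_eq_right.2 (Finset.mem_powerset.1 hT),
          Finset.sum_mul]

open Classical in
lemma isSimple_of_forall_mem_iff (hr : IsSetRing 𝒜) {s : Finset (Set Ω)}
    (hs : ∀ A ∈ s, A ∈ 𝒜) {f : Ω → ℝ}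
    (hf : ∀ ω ω', (∀ A ∈ s, ω ∈ A ↔ ω' ∈ A) → f ω = f ω')
    (hf₀ : ∀ ω, (∀ A ∈ s, ω ∉ A) → f ω = 0) : IsSimple 𝒜 f := by
  refine ⟨{T ∈ s.powerset | T.Nonempty}.image (atomOf s),
    fun B => if hB : B.Nonempty then f hB.some else 0, ?_, fun ω => ?_⟩
  · simp only [Finset.mem_image, Finset.mem_filter, Finset.mem_powerset]
    rintro _ ⟨T, ⟨hTs, hT⟩, rfl⟩
    exact atomOf_mem hr hs hTs hT
  set T₀ := {A ∈ s | ω ∈ A}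
  have hω : ω ∈ atomOf s T₀ := mem_atomOf_filter s ω
  have hnot : ∀ B ∈ {T ∈ s.powerset | T.Nonempty}.image (atomOf s), B ≠ atomOf s T₀ →
      B.indicator (fun _ => (1 : ℝ)) ω = 0 := by
    simp only [Finset.mem_image, Finset.mem_filter, Finset.mem_powerset]
    rintro _ ⟨T, ⟨hTs, -⟩, rfl⟩ hne
    exact indicator_of_notMem (fun h => hne (by rw [eq_of_mem_atomOf hTs
      (Finset.filter_subset _ _) h hω])) _
  rcases T₀.eq_empty_or_nonempty with hT₀ | hT₀
  · have hout : ∀ A ∈ s, ω ∉ A := fun A hA hωA =>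
      Finset.notMem_empty A (hT₀ ▸ Finset.mem_filter.2 ⟨hA, hωA⟩)
    rw [hf₀ ω hout, eq_comm]
    refine Finset.sum_eq_zero fun B hB => ?_
    rw [hnot B hB fun h => ?_, mul_zero]
    obtain ⟨T, hT, rfl⟩ := Finset.mem_image.1 hB
    simp only [Finset.mem_filter, Finset.mem_powerset] at hT
    obtain ⟨A, hA⟩ := hT.2
    exact hout A (hT.1 hA) (((h ▸ hω : ω ∈ atomOf s T) A (hT.1 hA)).2 hA)
  · have hne : (atomOf s T₀).Nonempty := ⟨ω, hω⟩
    rw [Finset.sum_eq_single_of_mem _ (Finset.mem_image_of_mem _ (Finset.mem_filter.2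
      ⟨Finset.mem_powerset.2 (Finset.filter_subset _ _), hT₀⟩)) fun B hB hne =>
      by rw [hnot B hB hne, mul_zero], indicator_of_mem hω, mul_one]
    dsimp only
    rw [dif_pos hne]
    exact hf _ _ fun A hA => (hω A hA).trans (hne.some_mem A hA).symm

end Atoms

section SimpleFunctions

lemma SimpleIntegralEq.isSimple {f : Ω → ℝ} {I : ℝ} (h : SimpleIntegralEq 𝒜 μ f I) :
    IsSimple 𝒜 f :=
  let ⟨s, c, hs, hf, _⟩ := h
  ⟨s, c, hs, hf⟩

lemma IsSimple.exists_simpleIntegralEq {f : Ω → ℝ} (h : IsSimple 𝒜 f) :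
    ∃ I, SimpleIntegralEq 𝒜 μ f I :=
  let ⟨s, c, hs, hf⟩ := h
  ⟨_, s, c, hs, hf, rfl⟩

lemma simpleIntegralEq_mul_indicator {A : Set Ω} (hA : A ∈ 𝒜) (a : ℝ) :
    SimpleIntegralEq 𝒜 μ (fun ω => a * 𝟙[A] ω) (a * μ A) :=
  ⟨{A}, fun _ => a, by simpa using hA, by simp, by simp⟩

lemma SimpleIntegralEq.neg {f : Ω → ℝ} {I : ℝ} (h : SimpleIntegralEq 𝒜 μ f I) :
    SimpleIntegralEq 𝒜 μ (fun ω => -f ω) (-I) := by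
  obtain ⟨s, c, hs, hf, rfl⟩ := h
  exact ⟨s, fun A => -c A, hs, fun ω => by simp [hf ω], by simp⟩

lemma SimpleIntegralEq.add {f g : Ω → ℝ} {I J : ℝ} (hf : SimpleIntegralEq 𝒜 μ f I)
    (hg : SimpleIntegralEq 𝒜 μ g J) : SimpleIntegralEq 𝒜 μ (fun ω => f ω + g ω) (I + J) := by
  classical
  obtain ⟨s, c, hs, hf, rfl⟩ := hf
  obtain ⟨t, d, ht, hg, rfl⟩ := hg
  have key : ∀ x : Set Ω → ℝ, ∑ A ∈ s ∪ t,
      ((if A ∈ s then c A else 0) + (if A ∈ t then d A else 0)) * x A =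
        ∑ A ∈ s, c A * x A + ∑ A ∈ t, d A * x A := fun x => by
    simp only [add_mul, ite_mul, zero_mul, Finset.sum_add_distrib, Finset.sum_ite_mem,
      Finset.union_inter_cancel_left, Finset.union_inter_cancel_right]
  refine ⟨s ∪ t, _, fun A hA => (Finset.mem_union.1 hA).elim (hs A) (ht A),
    fun ω => ?_, (key μ).symm⟩
  show f ω + g ω = _
  rw [hf ω, hg ω, key]

lemma SimpleIntegralEq.nonneg (hμ : FAMeasure 𝒜 μ) {f : Ω → ℝ} {I : ℝ}
    (h : SimpleIntegralEq 𝒜 μ f I) (hf₀ : ∀ ω, 0 ≤ f ω) : 0 ≤ I := by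
  obtain ⟨s, c, hs, hf, rfl⟩ := h
  rw [hμ.sum_mul_measure_eq_sum_atomOf c hs]
  refine Finset.sum_nonneg fun T hT => ?_
  have hTs := Finset.mem_powerset.1 hT
  rcases T.eq_empty_or_nonempty with rfl | hT₀
  · simp
  rcases (atomOf s T).eq_empty_or_nonempty with he | ⟨ω, hω⟩
  · rw [he, hμ.2.2.1, mul_zero]
  rw [← sum_mul_indicator_eq_of_mem_atomOf s c hTs hω, ← hf ω]
  exact mul_nonneg (hf₀ ω) (hμ.2.1 _ (atomOf_mem hμ.1 hs hTs hT₀))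

lemma SimpleIntegralEq.mono (hμ : FAMeasure 𝒜 μ) {f g : Ω → ℝ} {I J : ℝ}
    (hf : SimpleIntegralEq 𝒜 μ f I) (hg : SimpleIntegralEq 𝒜 μ g J) (hfg : ∀ ω, f ω ≤ g ω) :
    I ≤ J := by
  have := (hg.add hf.neg).nonneg hμ fun ω => by linarith [hfg ω]
  linarith

lemma SimpleIntegralEq.unique (hμ : FAMeasure 𝒜 μ) {f : Ω → ℝ} {I J : ℝ}
    (hI : SimpleIntegralEq 𝒜 μ f I) (hJ : SimpleIntegralEq 𝒜 μ f J) : I = J :=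
  (hI.mono hμ hJ fun _ => le_rfl).antisymm (hJ.mono hμ hI fun _ => le_rfl)

lemma SimpleIntegralEq.abs_sub_le (hμ : FAMeasure 𝒜 μ) {f g : Ω → ℝ} {I J D : ℝ}
    (hf : SimpleIntegralEq 𝒜 μ f I) (hg : SimpleIntegralEq 𝒜 μ g J)
    (hD : SimpleIntegralEq 𝒜 μ (fun ω => |f ω - g ω|) D) : |I - J| ≤ D := by
  rw [abs_sub_le_iff]
  constructor
  · linarith [hf.mono hμ (hg.add hD) fun ω => by linarith [le_abs_self (f ω - g ω)]]
  · linarith [hg.mono hμ (hf.add hD) fun ω => by linarith [neg_abs_le (f ω - g ω)]]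

lemma IsSimple.comp₂ (hr : IsSetRing 𝒜) {f g : Ω → ℝ} (hf : IsSimple 𝒜 f) (hg : IsSimple 𝒜 g)
    {Φ : ℝ → ℝ → ℝ} (hΦ : Φ 0 0 = 0) : IsSimple 𝒜 (fun ω => Φ (f ω) (g ω)) := by
  classical
  obtain ⟨s, c, hs, hf⟩ := hf
  obtain ⟨t, d, ht, hg⟩ := hg
  refine isSimple_of_forall_mem_iff hr (s := s ∪ t)
    (fun A hA => (Finset.mem_union.1 hA).elim (hs A) (ht A)) (fun ω ω' h => ?_) fun ω h => ?_
  · have hst : ∀ A ∈ s ∪ t, 𝟙[A] ω = 𝟙[A] ω' := fun A hA => by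
      simp only [indicator, h A hA]
    have hfω : f ω = f ω' := by
      rw [hf, hf]
      exact Finset.sum_congr rfl fun A hA => by rw [hst A (Finset.mem_union_left t hA)]
    have hgω : g ω = g ω' := by
      rw [hg, hg]
      exact Finset.sum_congr rfl fun A hA => by rw [hst A (Finset.mem_union_right s hA)]
    rw [hfω, hgω]
  · have h₀ : ∀ A ∈ s ∪ t, 𝟙[A] ω = 0 := fun A hA => indicator_of_notMem (h A hA) _
    simp only [hf, hg]
    rw [Finset.sum_eq_zero fun A hA => by rw [h₀ A (Finset.mem_union_left t hA), mul_zero],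
      Finset.sum_eq_zero fun A hA => by rw [h₀ A (Finset.mem_union_right s hA), mul_zero], hΦ]

lemma IsSimple.exists_le_mul_indicator (hr : IsSetRing 𝒜) {f : Ω → ℝ} (hf : IsSimple 𝒜 f) :
    ∃ A ∈ 𝒜, ∃ M, 0 ≤ M ∧ ∀ ω, f ω ≤ M * 𝟙[A] ω := by
  obtain ⟨s, c, hs, hf⟩ := hf
  refine ⟨⋃ B ∈ s, B, hr.biUnion_mem s hs, ∑ B ∈ s, |c B|,
    Finset.sum_nonneg fun B _ => abs_nonneg _, fun ω => ?_⟩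
  rw [hf ω, Finset.sum_mul]
  refine Finset.sum_le_sum fun B hB => ?_
  calc c B * 𝟙[B] ω ≤ |c B| * 𝟙[B] ω :=
        mul_le_mul_of_nonneg_right (le_abs_self _) (indicator_nonneg (fun _ _ => zero_le_one) _)
    _ ≤ |c B| * 𝟙[⋃ B ∈ s, B] ω :=
        mul_le_mul_of_nonneg_left (indicator_le_indicator_of_subset
          (show B ⊆ ⋃ B ∈ s, B from fun _ hx => mem_iUnion₂.2 ⟨B, hB, hx⟩)
          (fun _ => zero_le_one) ω) (abs_nonneg _)

end SimpleFunctions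

section OuterMeasure

lemma outer_mono {E F : Set Ω} (h : E ⊆ F) : outer 𝒜 μ E ≤ outer 𝒜 μ F :=
  le_iInf₂ fun A hA => le_iInf fun hF => iInf₂_le_of_le A hA (iInf_le_of_le (h.trans hF) le_rfl)

lemma outer_le_ofReal {A E : Set Ω} (hA : A ∈ 𝒜) (hE : E ⊆ A) :
    outer 𝒜 μ E ≤ ENNReal.ofReal (μ A) :=
  iInf₂_le_of_le A hA (iInf_le _ hE)

lemma exists_mem_of_outer_lt {E : Set Ω} {c : ℝ≥0∞} (h : outer 𝒜 μ E < c) :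
    ∃ A ∈ 𝒜, E ⊆ A ∧ ENNReal.ofReal (μ A) < c := by
  by_contra! hc
  exact h.not_ge (le_iInf₂ fun A hA => le_iInf fun hE => hc A hA hE)

lemma exists_mem_of_outer_lt_ofReal {E : Set Ω} {c : ℝ} (h : outer 𝒜 μ E < ENNReal.ofReal c) :
    ∃ A ∈ 𝒜, E ⊆ A ∧ μ A < c := by
  obtain ⟨A, hA, hEA, hAc⟩ := exists_mem_of_outer_lt h
  exact ⟨A, hA, hEA, (ENNReal.ofReal_lt_ofReal_iff'.1 hAc).1⟩

lemma outer_empty (hμ : FAMeasure 𝒜 μ) : outer 𝒜 μ (∅ : Set Ω) = 0 :=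
  le_antisymm ((outer_le_ofReal hμ.1.empty_mem subset_rfl).trans_eq (by simp [hμ.2.2.1]))
    zero_le

lemma outer_union_le (hμ : FAMeasure 𝒜 μ) (E F : Set Ω) :
    outer 𝒜 μ (E ∪ F) ≤ outer 𝒜 μ E + outer 𝒜 μ F := by
  rcases eq_top_or_lt_top (outer 𝒜 μ E) with hE | hE
  · simp [hE]
  rcases eq_top_or_lt_top (outer 𝒜 μ F) with hF | hF
  · simp [hF]
  refine ENNReal.le_of_forall_pos_le_add fun ε hε _ => ?_
  have hε₂ : (ε : ℝ≥0∞) / 2 ≠ 0 := by simp [hε.ne']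
  obtain ⟨A, hA, hEA, hAε⟩ := exists_mem_of_outer_lt (ENNReal.lt_add_right hE.ne hε₂)
  obtain ⟨B, hB, hFB, hBε⟩ := exists_mem_of_outer_lt (ENNReal.lt_add_right hF.ne hε₂)
  calc outer 𝒜 μ (E ∪ F) ≤ ENNReal.ofReal (μ (A ∪ B)) :=
        outer_le_ofReal (hμ.1.union_mem hA hB) (union_subset_union hEA hFB)
    _ ≤ ENNReal.ofReal (μ A) + ENNReal.ofReal (μ B) :=
        (ENNReal.ofReal_le_ofReal (hμ.union_le hA hB)).trans ENNReal.ofReal_add_le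
    _ ≤ outer 𝒜 μ E + ε / 2 + (outer 𝒜 μ F + ε / 2) := add_le_add hAε.le hBε.le
    _ = outer 𝒜 μ E + outer 𝒜 μ F + ε := by rw [add_add_add_comm, ENNReal.add_halves]

lemma ConvInMeasure.of_abs_sub_le {g g' : ℕ → Ω → ℝ} {f f' : Ω → ℝ}
    (h : ConvInMeasure 𝒜 μ g f) (hle : ∀ n ω, |g' n ω - f' ω| ≤ |g n ω - f ω|) :
    ConvInMeasure 𝒜 μ g' f' := fun c hc =>
  tendsto_of_tendsto_of_tendsto_of_le_of_le tendsto_const_nhds (h c hc) (fun _ => zero_le)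
    fun n => outer_mono fun ω hω => lt_of_lt_of_le hω (hle n ω)

end OuterMeasure

section Integral

lemma CauchyL1.of_abs_sub_le (hμ : FAMeasure 𝒜 μ) {g g' : ℕ → Ω → ℝ}
    (hg' : ∀ n, IsSimple 𝒜 (g' n)) (hle : ∀ m n ω, |g' m ω - g' n ω| ≤ |g m ω - g n ω|)
    (hg : CauchyL1 𝒜 μ g) : CauchyL1 𝒜 μ g' := by
  intro ε hε
  obtain ⟨N, hN⟩ := hg ε hε
  refine ⟨N, fun m hm n hn => ?_⟩
  obtain ⟨D, hD, hDε⟩ := hN m hm n hn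
  obtain ⟨W, hW⟩ := ((hg' m).comp₂ hμ.1 (hg' n) (Φ := fun x y => |x - y|)
    (by simp)).exists_simpleIntegralEq (μ := μ)
  exact ⟨W, hW, (hW.mono hμ hD (hle m n)).trans_lt hDε⟩

lemma CauchyL1.cauchySeq (hμ : FAMeasure 𝒜 μ) {g : ℕ → Ω → ℝ} {V : ℕ → ℝ}
    (hg : CauchyL1 𝒜 μ g) (hV : ∀ n, SimpleIntegralEq 𝒜 μ (g n) (V n)) : CauchySeq V := by
  refine Metric.cauchySeq_iff.2 fun ε hε => ?_
  obtain ⟨N, hN⟩ := hg ε hε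
  refine ⟨N, fun m hm n hn => ?_⟩
  obtain ⟨W, hW, hWε⟩ := hN m hm n hn
  exact (Real.dist_eq _ _ ▸ (hV m).abs_sub_le hμ (hV n) hW).trans_lt hWε

lemma SimpleIntegralEq.hasIntegral (hμ : FAMeasure 𝒜 μ) {f : Ω → ℝ} {I : ℝ}
    (h : SimpleIntegralEq 𝒜 μ f I) : HasIntegral 𝒜 μ f I := by
  refine ⟨fun _ => f, fun _ => I, fun _ => h.isSimple, fun c hc => ?_,
    fun ε hε => ⟨0, fun _ _ _ _ => ⟨0, ⟨∅, 0, by simp, by simp, by simp⟩, hε⟩⟩,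
    fun _ => h, tendsto_const_nhds⟩
  simp only [sub_self, abs_zero, not_lt.2 hc.le, ofPred_false, outer_empty hμ,
    tendsto_const_nhds]

lemma HasIntegral.neg (hμ : FAMeasure 𝒜 μ) {f : Ω → ℝ} {I : ℝ} (hf : HasIntegral 𝒜 μ f I) :
    HasIntegral 𝒜 μ (fun ω => -f ω) (-I) := by
  obtain ⟨g, J, -, hconv, hcauchy, hJ, hJI⟩ := hf
  have habs : ∀ a b : ℝ, |-a - -b| = |a - b| := fun a b => by rw [neg_sub_neg, abs_sub_comm]
  exact ⟨fun n ω => -g n ω, fun n => -J n, fun n => (hJ n).neg.isSimple,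
    hconv.of_abs_sub_le fun n ω => (habs _ _).le,
    hcauchy.of_abs_sub_le hμ (fun n => (hJ n).neg.isSimple) fun m n ω => (habs _ _).le,
    fun n => (hJ n).neg, hJI.neg⟩

lemma HasIntegral.add (hμ : FAMeasure 𝒜 μ) {f g : Ω → ℝ} {I J : ℝ}
    (hf : HasIntegral 𝒜 μ f I) (hg : HasIntegral 𝒜 μ g J) :
    HasIntegral 𝒜 μ (fun ω => f ω + g ω) (I + J) := by
  obtain ⟨a, Ja, -, ha_conv, ha_cauchy, ha_int, ha_lim⟩ := hf
  obtain ⟨b, Jb, -, hb_conv, hb_cauchy, hb_int, hb_lim⟩ := hg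
  have hab : ∀ n, SimpleIntegralEq 𝒜 μ (fun ω => a n ω + b n ω) (Ja n + Jb n) :=
    fun n => (ha_int n).add (hb_int n)
  refine ⟨fun n ω => a n ω + b n ω, _, fun n => (hab n).isSimple, fun c hc => ?_,
    fun ε hε => ?_, hab, ha_lim.add hb_lim⟩
  · have hsub : ∀ n, {ω | c < |(a n ω + b n ω) - (f ω + g ω)|} ⊆
        {ω | c / 2 < |a n ω - f ω|} ∪ {ω | c / 2 < |b n ω - g ω|} := fun n ω hω => by
      by_contra! h
      simp only [mem_union, mem_ofPred_eq, not_or, not_lt] at h hω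
      have := abs_add_le (a n ω - f ω) (b n ω - g ω)
      rw [add_sub_add_comm] at hω
      linarith
    have h₀ := (ha_conv (c / 2) (by positivity)).add (hb_conv (c / 2) (by positivity))
    rw [add_zero] at h₀
    exact tendsto_of_tendsto_of_tendsto_of_le_of_le tendsto_const_nhds h₀ (fun _ => zero_le)
      fun n => (outer_mono (hsub n)).trans (outer_union_le hμ _ _)
  · obtain ⟨N₁, h₁⟩ := ha_cauchy (ε / 2) (by positivity)
    obtain ⟨N₂, h₂⟩ := hb_cauchy (ε / 2) (by positivity)
    refine ⟨max N₁ N₂, fun m hm n hn => ?_⟩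
    obtain ⟨D₁, hD₁, hD₁ε⟩ := h₁ m (le_of_max_le_left hm) n (le_of_max_le_left hn)
    obtain ⟨D₂, hD₂, hD₂ε⟩ := h₂ m (le_of_max_le_right hm) n (le_of_max_le_right hn)
    obtain ⟨W, hW⟩ := ((hab m).isSimple.comp₂ hμ.1 (hab n).isSimple (Φ := fun x y => |x - y|)
      (by simp)).exists_simpleIntegralEq (μ := μ)
    refine ⟨W, hW, ?_⟩
    have := hW.mono hμ (hD₁.add hD₂) fun ω => by
      rw [add_sub_add_comm]
      exact abs_add_le _ _
    linarith

lemma tendsto_zero_of_forall_eventually_le {ι : Type*} {l : Filter ι} {u : ι → ℝ}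
    (h₀ : ∀ i, 0 ≤ u i) (h : ∀ ε > 0, ∀ᶠ i in l, u i ≤ ε) : Tendsto u l (𝓝 0) :=
  tendsto_order.2 ⟨fun a ha => Eventually.of_forall fun i => ha.trans_le (h₀ i),
    fun a ha => (h (a / 2) (by positivity)).mono fun i hi => by linarith⟩

lemma le_add_mul_indicator_add_mul_indicator {f g φ δ M : ℝ} {A B : Set Ω} {ω : Ω}
    (hg : 0 ≤ g) (hδ : 0 ≤ δ) (hM : 0 ≤ M) (hf : f ≤ g + φ) (hφ : φ ≤ M * 𝟙[A] ω)
    (hfB : ω ∉ B → f ≤ δ) : f ≤ g + (δ * 𝟙[A] ω + M * 𝟙[B] ω) := by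
  by_cases hB : ω ∈ B
  · by_cases hA : ω ∈ A <;>
      simp only [indicator_of_mem, indicator_of_notMem, hA, hB, not_false_eq_true, mul_one,
        mul_zero] at hφ ⊢ <;> linarith
  · have := hfB hB
    by_cases hA : ω ∈ A <;>
      simp only [indicator_of_mem, indicator_of_notMem, hA, hB, not_false_eq_true, mul_one,
        mul_zero] at hφ ⊢ <;> linarith

lemma tendsto_simpleIntegral_zero_of_convInMeasure_zero (hμ : FAMeasure 𝒜 μ)
    {φ : ℕ → Ω → ℝ} {K : ℕ → ℝ} (hK : ∀ n, SimpleIntegralEq 𝒜 μ (φ n) (K n))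
    (hφ₀ : ∀ n ω, 0 ≤ φ n ω)
    (hconv : ConvInMeasure 𝒜 μ φ fun _ => 0) (hcauchy : CauchyL1 𝒜 μ φ) :
    Tendsto K atTop (𝓝 0) := by
  refine tendsto_zero_of_forall_eventually_le (fun n => (hK n).nonneg hμ (hφ₀ n))
    fun ε hε => ?_
  obtain ⟨N, hN⟩ := hcauchy (ε / 3) (by positivity)
  obtain ⟨A, hA, M, hM, hφA⟩ := (hK N).isSimple.exists_le_mul_indicator hμ.1
  obtain ⟨δ, hδ, hδA⟩ := exists_pos_mul_lt (by positivity : 0 < ε / 3) (μ A)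
  obtain ⟨η, hη, hMη⟩ := exists_pos_mul_lt (by positivity : 0 < ε / 3) M
  filter_upwards [eventually_ge_atTop N,
    (hconv δ hδ).eventually_lt_const (ENNReal.ofReal_pos.2 hη)] with n hn hout
  obtain ⟨W, hW, hWε⟩ := hN n hn N le_rfl
  obtain ⟨B, hB, hsub, hBη⟩ := exists_mem_of_outer_lt_ofReal hout
  have hbound := (hK n).mono hμ (hW.add ((simpleIntegralEq_mul_indicator hA δ).add
    (simpleIntegralEq_mul_indicator hB M))) fun ω =>
    le_add_mul_indicator_add_mul_indicator (abs_nonneg _) hδ.le hM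
      (by linarith [le_abs_self (φ n ω - φ N ω)]) (hφA ω) fun hω => by
        by_contra! h
        exact hω (hsub (by simpa [abs_of_nonneg (hφ₀ n ω)] using h))
  nlinarith [mul_le_mul_of_nonneg_left hBη.le hM]

lemma HasIntegral.nonneg (hμ : FAMeasure 𝒜 μ) {f : Ω → ℝ} {I : ℝ} (hf : HasIntegral 𝒜 μ f I)
    (hf₀ : ∀ ω, 0 ≤ f ω) : 0 ≤ I := by
  obtain ⟨g, J, hg, hconv, hcauchy, hJ, hJI⟩ := hf
  have hneg : ∀ n, IsSimple 𝒜 fun ω => max (-g n ω) 0 := fun n =>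
    (hg n).comp₂ hμ.1 (hg n) (Φ := fun x _ => max (-x) 0) (by simp)
  choose K hK using fun n => (hneg n).exists_simpleIntegralEq (μ := μ)
  -- `J n ≥ -K n`, where `K n` integrates the negative part of the `n`-th approximant
  have hK₀ : Tendsto K atTop (𝓝 0) := by
    refine tendsto_simpleIntegral_zero_of_convInMeasure_zero hμ hK
      (fun n ω => le_max_right _ _)
      (hconv.of_abs_sub_le fun n ω => ?_)
      (hcauchy.of_abs_sub_le hμ hneg fun m n ω => ?_)
    · rw [sub_zero, abs_of_nonneg (le_max_right _ _), abs_sub_comm]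
      exact max_le (by linarith [hf₀ ω, le_abs_self (f ω - g n ω)]) (abs_nonneg _)
    · simpa only [neg_sub_neg, abs_sub_comm] using abs_max_sub_max_le_abs (-g m ω) (-g n ω) 0
  have hJK : ∀ n, -K n ≤ J n := fun n =>
    (hK n).neg.mono hμ (hJ n) fun ω => by linarith [le_max_left (-g n ω) 0]
  simpa using le_of_tendsto_of_tendsto' hK₀.neg hJI hJK

lemma HasIntegral.mono (hμ : FAMeasure 𝒜 μ) {f g : Ω → ℝ} {I J : ℝ}
    (hf : HasIntegral 𝒜 μ f I) (hg : HasIntegral 𝒜 μ g J) (hfg : ∀ ω, f ω ≤ g ω) : I ≤ J := by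
  have := (hg.add hμ (hf.neg hμ)).nonneg hμ fun ω => by linarith [hfg ω]
  linarith

lemma exists_hasIntegral_comp₂ (hμ : FAMeasure 𝒜 μ) {g : ℕ → Ω → ℝ} {f σ : Ω → ℝ}
    {V : ℕ → ℝ} (hconv : ConvInMeasure 𝒜 μ g f) (hcauchy : CauchyL1 𝒜 μ g)
    {Φ : ℝ → ℝ → ℝ} (hΦ : ∀ x y z, |Φ x z - Φ y z| ≤ |x - y|)
    (hV : ∀ n, SimpleIntegralEq 𝒜 μ (fun ω => Φ (g n ω) (σ ω)) (V n)) :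
    ∃ L, Tendsto V atTop (𝓝 L) ∧ HasIntegral 𝒜 μ (fun ω => Φ (f ω) (σ ω)) L := by
  have hcauchy' : CauchyL1 𝒜 μ fun n ω => Φ (g n ω) (σ ω) :=
    hcauchy.of_abs_sub_le hμ (fun n => (hV n).isSimple) fun _ _ _ => hΦ _ _ _
  obtain ⟨L, hL⟩ := cauchySeq_tendsto_of_complete (hcauchy'.cauchySeq hμ hV)
  exact ⟨L, hL, _, V, fun n => (hV n).isSimple,
    hconv.of_abs_sub_le fun _ _ => hΦ _ _ _, hcauchy', hV, hL⟩

lemma HasIntegral.exists_isSimple_abs_sub_lt (hμ : FAMeasure 𝒜 μ) {f : Ω → ℝ} {I : ℝ}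
    (hf : HasIntegral 𝒜 μ f I) {ε : ℝ} (hε : 0 < ε) :
    ∃ φ D, IsSimple 𝒜 φ ∧ HasIntegral 𝒜 μ (fun ω => |f ω - φ ω|) D ∧ D < ε := by
  obtain ⟨g, -, hg, hconv, hcauchy, -, -⟩ := hf
  obtain ⟨N, hN⟩ := hcauchy (ε / 2) (by positivity)
  choose V hV using fun m => ((hg m).comp₂ hμ.1 (hg N) (Φ := fun x y => |x - y|)
    (by simp)).exists_simpleIntegralEq (μ := μ)
  obtain ⟨D, hVD, hD⟩ := exists_hasIntegral_comp₂ hμ hconv hcauchy (fun x y z => by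
    simpa using abs_abs_sub_abs_le_abs_sub (x - z) (y - z)) hV
  have hVε : ∀ m ≥ N, V m ≤ ε / 2 := fun m hm => by
    obtain ⟨W, hW, hWε⟩ := hN m hm N le_rfl
    exact ((hV m).unique hμ hW).trans_le hWε.le
  exact ⟨g N, D, hg N, hD, by linarith [le_of_tendsto hVD (eventually_atTop.2 ⟨N, hVε⟩)]⟩

theorem tendsto_integral_zero_of_tendstoUniformlyOn_compl (hμ : FAMeasure 𝒜 μ)
    {F : Ω → ℝ} {J : ℝ} {f : ℕ → Ω → ℝ} {I : ℕ → ℝ} (hF : HasIntegral 𝒜 μ F J)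
    (hf : ∀ n, HasIntegral 𝒜 μ (f n) (I n)) (hf₀ : ∀ n ω, 0 ≤ f n ω)
    (hfF : ∀ n ω, f n ω ≤ F ω)
    (hunif : ∀ η > 0, ∃ B ∈ 𝒜, μ B < η ∧ TendstoUniformlyOn f 0 atTop Bᶜ) :
    Tendsto I atTop (𝓝 0) := by
  refine tendsto_zero_of_forall_eventually_le (fun n => (hf n).nonneg hμ (hf₀ n))
    fun ε hε => ?_
  obtain ⟨φ, D, hφ, hD, hDε⟩ := hF.exists_isSimple_abs_sub_lt hμ (by positivity : 0 < ε / 3)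
  obtain ⟨A, hA, M, hM, hφA⟩ := hφ.exists_le_mul_indicator hμ.1
  obtain ⟨δ, hδ, hδA⟩ := exists_pos_mul_lt (by positivity : 0 < ε / 3) (μ A)
  obtain ⟨η, hη, hMη⟩ := exists_pos_mul_lt (by positivity : 0 < ε / 3) M
  obtain ⟨B, hB, hBη, hfB⟩ := hunif η hη
  filter_upwards [Metric.tendstoUniformlyOn_iff.1 hfB δ hδ] with n hn
  have hbound := (hf n).mono hμ (hD.add hμ (((simpleIntegralEq_mul_indicator hA δ).add
    (simpleIntegralEq_mul_indicator hB M)).hasIntegral hμ)) fun ω =>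
    le_add_mul_indicator_add_mul_indicator (abs_nonneg _) hδ.le hM
      (by linarith [hfF n ω, le_abs_self (F ω - φ ω)]) (hφA ω) fun hω => by
        have := hn ω hω
        rw [Real.dist_eq, Pi.zero_apply, zero_sub, abs_neg] at this
        exact (le_abs_self _).trans this.le
  nlinarith [mul_le_mul_of_nonneg_left hBη.le hM]

end Integral

end FA

theorem stmt10_general {S : Type*} [TopologicalSpace S] {Ω' : Type*}
    (H : Set (S → ℝ))
    (hcont : ∀ f ∈ H, Continuous f)
    (X' : Ω' → S) (hrange : IsClosed (Set.range X'))
    (𝒜 : Set (Set Ω')) (μ : Set Ω' → ℝ) (hμ : FAMeasure 𝒜 μ)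
    (htight : ∀ ε : ℝ≥0∞, 0 < ε → ∃ K : Set S, IsCompact K ∧
      outer 𝒜 μ {ω | X' ω ∉ K} < ε)
    (h : ℕ → S → ℝ) (hH : ∀ n, h n ∈ H)
    (hanti : ∀ s ∈ Set.range X', Antitone (fun n => h n s))
    (hto0 : ∀ s ∈ Set.range X', Tendsto (fun n => h n s) atTop (nhds 0))
    (I : ℕ → ℝ) (hI : ∀ n, HasIntegral 𝒜 μ (fun ω => h n (X' ω)) (I n)) :
    Tendsto I atTop (nhds 0) := by
  refine tendsto_integral_zero_of_tendstoUniformlyOn_compl hμ (hI 0) hI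
    (fun n ω => (hanti _ ⟨ω, rfl⟩).le_of_tendsto (hto0 _ ⟨ω, rfl⟩) n)
    (fun n ω => hanti _ ⟨ω, rfl⟩ n.zero_le) fun η hη => ?_
  obtain ⟨K, hK, hKη⟩ := htight _ (ENNReal.ofReal_pos.2 hη)
  obtain ⟨B, hB, hKB, hBη⟩ := exists_mem_of_outer_lt_ofReal hKη
  have hdini : TendstoUniformlyOn h 0 atTop (K ∩ Set.range X') :=
    Antitone.tendstoUniformlyOn_of_forall_tendsto (hK.inter_right hrange)
      (fun n => (hcont _ (hH n)).continuousOn) (fun s hs => hanti s hs.2) continuousOn_const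
      fun s hs => hto0 s hs.2
  exact ⟨B, hB, hBη,
    (hdini.comp X').mono fun ω hω => ⟨not_not.1 fun hωK => hω (hKB hωK), ω, rfl⟩⟩

/-- with `X'` having closed range, `μ`-tight, and `(h_n)` a sequence in a
Stonean vector sublattice of continuous functions decreasing pointwise to `0` on the
range of `X'`, the integrals `∫ h_n(X') dμ` tend to `0`. -/
theorem stmt10 {S : Type*} [TopologicalSpace S] {Ω' : Type*}
    (H : Set (S → ℝ))
    (hcont : ∀ f ∈ H, Continuous f)
    (hadd : ∀ f ∈ H, ∀ g ∈ H, f + g ∈ H)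
    (hsmul : ∀ (c : ℝ), ∀ f ∈ H, c • f ∈ H)
    (hsup : ∀ f ∈ H, ∀ g ∈ H, (fun s => max (f s) (g s)) ∈ H)
    (hstone : ∀ f ∈ H, (fun s => min (f s) 1) ∈ H)
    (X' : Ω' → S) (hrange : IsClosed (Set.range X'))
    (𝒜 : Set (Set Ω')) (μ : Set Ω' → ℝ) (hμ : FAMeasure 𝒜 μ)
    (htight : ∀ ε : ℝ≥0∞, 0 < ε → ∃ K : Set S, IsCompact K ∧
      outer 𝒜 μ {ω | X' ω ∉ K} < ε)
    (h : ℕ → S → ℝ) (hH : ∀ n, h n ∈ H)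
    (hanti : ∀ s ∈ Set.range X', Antitone (fun n => h n s))
    (hto0 : ∀ s ∈ Set.range X', Tendsto (fun n => h n s) atTop (nhds 0))
    (I : ℕ → ℝ) (hI : ∀ n, HasIntegral 𝒜 μ (fun ω => h n (X' ω)) (I n)) :
    Tendsto I atTop (nhds 0) :=
  stmt10_general H hcont X' hrange 𝒜 μ hμ htight h hH hanti hto0 I hI
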